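/- arXiv:2211.13570 — 2 statements merged into one kernel-verified Lean document; each statement's English description precedes it below -/
import Mathlib

section
/- For all complex s with Re(s) > 1, ∑_{n≥1} ε_{n-1}/n^s = (2^s/(2^s + 1)) · ∑_{m≥0} ε_m/(2m+1)^s. -/
open Complex

/-- The Thue-Morse sequence: binary digit sum of `n` modulo 2. -/
def tm (n : ℕ) : ℕ := (Nat.digits 2 n).sum % 2

/-- The ±1 Thue-Morse sequence `ε n = (-1)^(t n)`. -/
noncomputable def eps (n : ℕ) : ℂ := (-1) ^ tm n

lemma neg_one_pow_mod_two (n : ℕ) : ((-1 : ℂ)) ^ (n % 2) = (-1) ^ n := by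
  conv_rhs => rw [← Nat.div_add_mod n 2]
  rw [pow_add, pow_mul]
  simp

lemma eps_eq (n : ℕ) : eps n = (-1) ^ (Nat.digits 2 n).sum := by
  rw [eps, tm, neg_one_pow_mod_two]

lemma eps_two_mul (m : ℕ) : eps (2 * m) = eps m := by
  rcases Nat.eq_zero_or_pos m with h | h
  · simp [h]
  · rw [eps_eq, eps_eq, Nat.digits_def' (by norm_num) (by omega)]
    simp [Nat.mul_div_cancel_left _ (by norm_num : 0 < 2), Nat.mul_mod_right]

lemma eps_two_mul_add_one (m : ℕ) : eps (2 * m + 1) = -eps m := by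
  rw [eps_eq, eps_eq, Nat.digits_def' (by norm_num) (by omega)]
  have h1 : (2 * m + 1) % 2 = 1 := by omega
  have h2 : (2 * m + 1) / 2 = m := by omega
  rw [h1, h2]
  simp [pow_add, pow_succ]

lemma eps_norm (n : ℕ) : ‖eps n‖ = 1 := by
  rw [eps]
  rcases Nat.even_or_odd (tm n) with h | h
  · rw [h.neg_one_pow]; simp
  · rw [h.neg_one_pow]; simp

lemma two_cpow_ne_zero (s : ℂ) : (2 : ℂ) ^ s ≠ 0 := by
  simp [Complex.cpow_eq_zero_iff]

lemma two_cpow_add_one_ne_zero (s : ℂ) (hs : 1 < s.re) : (2 : ℂ) ^ s + 1 ≠ 0 := by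
  intro h
  have h2 : (2 : ℂ) ^ s = -1 := by linear_combination h
  have : ‖(2 : ℂ) ^ s‖ = 1 := by rw [h2]; simp
  have h3 : ((2 : ℝ) : ℂ) = (2 : ℂ) := by norm_num
  rw [← h3, Complex.norm_cpow_eq_rpow_re_of_pos (by norm_num)] at this
  have : (2 : ℝ) ^ s.re ≤ (2 : ℝ) ^ (1 : ℝ) := by
    rw [this, Real.rpow_one]; norm_num
  have := (Real.rpow_le_rpow_left_iff (by norm_num : (1:ℝ) < 2)).mp this
  linarith

lemma summable_main (s : ℂ) (hs : 1 < s.re) :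
    Summable (fun n : ℕ => eps n / ((n : ℂ) + 1) ^ s) := by
  have h : Summable (fun n : ℕ => 1 / ((n : ℂ)) ^ s) :=
    Complex.summable_one_div_nat_cpow.mpr hs
  have h2 : Summable (fun n : ℕ => 1 / ((n : ℂ) + 1) ^ s) := by
    have h3 := h.comp_injective (add_left_injective 1)
    apply h3.congr
    intro n
    simp [Function.comp]
  apply Summable.of_norm
  have h4 := h2.norm
  apply h4.congr
  intro n
  simp [norm_div, eps_norm]

theorem stmt_1 (s : ℂ) (hs : 1 < s.re) :
    ∑' n : ℕ, eps n / ((n : ℂ) + 1) ^ s =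
      2 ^ s / (2 ^ s + 1) * ∑' m : ℕ, eps m / (2 * (m : ℂ) + 1) ^ s := by
  set f : ℕ → ℂ := fun n => eps n / ((n : ℂ) + 1) ^ s with hf
  have hsum : Summable f := summable_main s hs
  have heven : Summable (fun k => f (2 * k)) :=
    hsum.comp_injective (fun a b => by omega)
  have hodd : Summable (fun k => f (2 * k + 1)) :=
    hsum.comp_injective (fun a b => by omega)
  have hsplit := tsum_even_add_odd heven hodd
  have he : ∀ k : ℕ, f (2 * k) = eps k / (2 * (k : ℂ) + 1) ^ s := by
    intro k
    simp only [hf, eps_two_mul]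
    push_cast
    ring_nf
  have h2s : (2 : ℂ) ^ s ≠ 0 := two_cpow_ne_zero s
  have ho : ∀ k : ℕ, f (2 * k + 1) = (-((2:ℂ) ^ s)⁻¹) * f k := by
    intro k
    simp only [hf, eps_two_mul_add_one]
    have hc : ((2 * k + 1 : ℕ) : ℂ) + 1 = ((2 : ℝ) : ℂ) * (((k : ℝ) + 1 : ℝ) : ℂ) := by
      push_cast; ring
    rw [hc, Complex.mul_cpow_ofReal_nonneg (by norm_num) (by positivity)]
    have h3 : ((2 : ℝ) : ℂ) = (2 : ℂ) := by norm_num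
    have h4 : (((k : ℝ) + 1 : ℝ) : ℂ) = (k : ℂ) + 1 := by push_cast; ring
    rw [h3, h4]
    field_simp
  have hOsum : ∑' k, f (2 * k) = ∑' m : ℕ, eps m / (2 * (m : ℂ) + 1) ^ s :=
    tsum_congr he
  have hFsum : ∑' k, f (2 * k + 1) = (-((2:ℂ) ^ s)⁻¹) * ∑' k, f k := by
    rw [tsum_congr ho, tsum_mul_left]
  set F := ∑' k, f k
  set O := ∑' m : ℕ, eps m / (2 * (m : ℂ) + 1) ^ s
  rw [hOsum, hFsum] at hsplit
  have hne := two_cpow_add_one_ne_zero s hs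
  have h1 : (2:ℂ)^s * (O + -((2:ℂ)^s)⁻¹ * F) = (2:ℂ)^s * F := by rw [hsplit]
  have h2 : (2:ℂ)^s * O - F = (2:ℂ)^s * F := by
    rw [← h1]; field_simp; ring
  rw [div_mul_eq_mul_div, eq_div_iff hne]
  linear_combination -h2
end

section
/- Let k, ℓ be real numbers and define q_n = t_n − k and r_n = t_n + ℓ for all n ≥ 0, and let λ(s;k,ℓ) = 2^s − (2^s(k − ℓ) + (k + ℓ)). If s is a complex number with Re(s) > 1 and λ(s;k,ℓ) = 0, then ∑_{n≥1} q_{n-1}/n^s = ((1 − 2^s)/(1 + 2^s))·∑_{n≥1} r_n/n^s. -/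
open Complex

lemma tm_le_one (n : ℕ) : tm n ≤ 1 :=
  Nat.lt_succ_iff.mp (Nat.mod_lt _ (by norm_num))

lemma tm_two_mul (m : ℕ) : tm (2 * m) = tm m := by
  rcases Nat.eq_zero_or_pos m with rfl | hm
  · rfl
  · unfold tm
    rw [Nat.digits_def' (by norm_num : 1 < 2) (by omega)]
    simp [Nat.mul_mod_right, Nat.mul_div_cancel_left _ (by norm_num : 0 < 2)]

lemma tm_two_mul_add_one (m : ℕ) : tm (2 * m + 1) = (1 + tm m) % 2 := by
  unfold tm
  rw [Nat.digits_def' (by norm_num : 1 < 2) (by omega)]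
  have h1 : (2 * m + 1) % 2 = 1 := by omega
  have h2 : (2 * m + 1) / 2 = m := by omega
  rw [h1, h2, List.sum_cons]
  omega

lemma tm_eq_zero_or_one (n : ℕ) : tm n = 0 ∨ tm n = 1 := by
  unfold tm; exact Nat.mod_two_eq_zero_or_one _

lemma tm_odd_cast (m : ℕ) : ((tm (2 * m + 1) : ℂ)) = 1 - (tm m : ℂ) := by
  rcases tm_eq_zero_or_one m with h | h <;>
    rw [tm_two_mul_add_one, h] <;> norm_num

theorem stmt_12 (k l : ℝ) (s : ℂ) (hs : 1 < s.re)
    (hl : (2 : ℂ) ^ s - (2 ^ s * ((k : ℂ) - l) + ((k : ℂ) + l)) = 0) :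
    ∑' n : ℕ, ((tm n : ℂ) - (k : ℂ)) / ((n : ℂ) + 1) ^ s =
      (1 - 2 ^ s) / (1 + 2 ^ s) *
        ∑' n : ℕ, ((tm (n + 1) : ℂ) + (l : ℂ)) / ((n : ℂ) + 1) ^ s := by
  have hs0 : s ≠ 0 := by
    intro h; rw [h] at hs; norm_num at hs
  set c : ℂ := (2 : ℂ) ^ s with hcdef
  have hc0 : c ≠ 0 := by
    rw [hcdef, Ne, cpow_eq_zero_iff]; norm_num
  have habs : ‖c‖ = (2 : ℝ) ^ s.re := by
    rw [hcdef, show ((2 : ℂ)) = ((2 : ℝ) : ℂ) by norm_num,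
      Complex.norm_cpow_eq_rpow_re_of_pos (by norm_num)]
  have h2lt : (2 : ℝ) < (2 : ℝ) ^ s.re := by
    have := (Real.rpow_lt_rpow_left_iff (x := (2:ℝ)) (by norm_num)).mpr hs
    rwa [Real.rpow_one] at this
  have hc1 : (1 : ℂ) + c ≠ 0 := by
    intro h
    have hc : c = -1 := by linear_combination h
    rw [hc] at habs
    simp at habs
    linarith
  -- the basic functions
  set fZ : ℕ → ℂ := fun n => 1 / (n : ℂ) ^ s with hfZ
  set fA : ℕ → ℂ := fun n => (tm n : ℂ) / (n : ℂ) ^ s with hfA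
  set fB : ℕ → ℂ := fun n => (tm (n - 1) : ℂ) / (n : ℂ) ^ s with hfB
  set fO : ℕ → ℂ := fun m => (tm m : ℂ) / ((2 * m + 1 : ℕ) : ℂ) ^ s with hfO
  have hZ : Summable fZ := Complex.summable_one_div_nat_cpow.mpr hs
  have hZnorm : Summable fun n => ‖fZ n‖ := summable_norm_iff.mpr hZ
  have hbound : ∀ (t n : ℕ), ‖(tm t : ℂ) / (n : ℂ) ^ s‖ ≤ ‖fZ n‖ := by
    intro t n
    rw [hfZ]
    simp only [norm_div]
    rw [div_eq_mul_inv, div_eq_mul_inv]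
    refine mul_le_mul_of_nonneg_right ?_ (inv_nonneg.mpr (norm_nonneg _))
    rw [Complex.norm_natCast, norm_one]
    exact_mod_cast tm_le_one t
  have hA : Summable fA := Summable.of_norm_bounded hZnorm (fun n => hbound n n)
  have hB : Summable fB := Summable.of_norm_bounded hZnorm (fun n => hbound (n - 1) n)
  have hinj2 : Function.Injective (fun m : ℕ => 2 * m) := fun a b h => by simp only [] at h; omega
  have hinj21 : Function.Injective (fun m : ℕ => 2 * m + 1) := fun a b h => by simp only [] at h; omega
  have hZe : Summable fun m => fZ (2 * m) := by
    simpa [Function.comp_def] using hZ.comp_injective hinj2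
  have hZo : Summable fun m => fZ (2 * m + 1) := by
    simpa [Function.comp_def] using hZ.comp_injective hinj21
  have hAe : Summable fun m => fA (2 * m) := by
    simpa [Function.comp_def] using hA.comp_injective hinj2
  have hAo : Summable fun m => fA (2 * m + 1) := by
    simpa [Function.comp_def] using hA.comp_injective hinj21
  have hBe : Summable fun m => fB (2 * m) := by
    simpa [Function.comp_def] using hB.comp_injective hinj2
  have hBo : Summable fun m => fB (2 * m + 1) := by
    simpa [Function.comp_def] using hB.comp_injective hinj21
  have hO : Summable fO := by
    exact Summable.of_norm_bounded (summable_norm_iff.mpr hZo) fun m => hbound m (2 * m + 1)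
  set Z := ∑' n, fZ n with hZdef
  set A := ∑' n, fA n with hAdef
  set B := ∑' n, fB n with hBdef
  set Zo := ∑' m, fZ (2 * m + 1) with hZodef
  set Ao := ∑' m, fO m with hAodef
  -- power-of-two factorization
  have pow2 : ∀ n : ℕ, ((2 * n : ℕ) : ℂ) ^ s = c * (n : ℂ) ^ s := by
    intro n
    rw [hcdef]
    push_cast
    exact_mod_cast Complex.natCast_mul_natCast_cpow 2 n s
  have hcast0 : ((0 : ℕ) : ℂ) ^ s = 0 := by
    rw [Nat.cast_zero, Complex.zero_cpow hs0]
  -- even-part identities (termwise)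
  have hZeven : ∀ m, fZ (2 * m) = (1 / c) * fZ m := by
    intro m
    rw [hfZ]
    simp only []
    rw [pow2 m, one_div, one_div, mul_inv, one_div]
  have hAeven : ∀ m, fA (2 * m) = (1 / c) * fA m := by
    intro m
    rw [hfA]
    simp only []
    rw [pow2 m, tm_two_mul, div_eq_mul_inv, mul_inv, one_div, div_eq_mul_inv]
    ring
  have hBeven : ∀ m, fB (2 * m) = (1 / c) * (fZ m - fB m) := by
    intro m
    rcases Nat.eq_zero_or_pos m with rfl | hm
    · show (tm (2 * 0 - 1) : ℂ) / ((2 * 0 : ℕ) : ℂ) ^ s = 1 / c * (1 / ((0:ℕ):ℂ) ^ s - (tm (0-1) : ℂ) / ((0:ℕ):ℂ) ^ s)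
      rw [hcast0]
      norm_num
    · have h1 : 2 * m - 1 = 2 * (m - 1) + 1 := by omega
      have hm' : ((m:ℕ):ℂ) ^ s ≠ 0 := by
        rw [Ne, cpow_eq_zero_iff]
        push_neg
        intro h
        exact absurd h (by exact_mod_cast Nat.pos_iff_ne_zero.mp hm)
      show (tm (2 * m - 1) : ℂ) / ((2 * m : ℕ) : ℂ) ^ s
          = 1 / c * (1 / (m : ℂ) ^ s - (tm (m - 1) : ℂ) / (m : ℂ) ^ s)
      rw [h1, tm_odd_cast, pow2 m]
      field_simp
  have hBodd : ∀ m, fB (2 * m + 1) = fO m := by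
    intro m
    show (tm (2 * m + 1 - 1) : ℂ) / ((2 * m + 1 : ℕ) : ℂ) ^ s = _
    rw [hfO]
    simp only []
    congr 2
    rw [show 2 * m + 1 - 1 = 2 * m by omega, tm_two_mul]
  have hAodd : ∀ m, fA (2 * m + 1) = fZ (2 * m + 1) - fO m := by
    intro m
    show (tm (2 * m + 1) : ℂ) / ((2 * m + 1 : ℕ) : ℂ) ^ s = _
    rw [tm_odd_cast, hfZ, hfO]
    simp only []
    rw [sub_div]
  -- the three splitting equations
  have hZe' : ∑' m, fZ (2 * m) = (1 / c) * Z := by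
    rw [tsum_congr hZeven, tsum_mul_left, ← hZdef]
  have hAe' : ∑' m, fA (2 * m) = (1 / c) * A := by
    rw [tsum_congr hAeven, tsum_mul_left, ← hAdef]
  have hBe' : ∑' m, fB (2 * m) = (1 / c) * (Z - B) := by
    rw [tsum_congr hBeven, tsum_mul_left, Summable.tsum_sub hZ hB, ← hZdef, ← hBdef]
  have hAo' : ∑' m, fA (2 * m + 1) = Zo - Ao := by
    rw [tsum_congr hAodd, Summable.tsum_sub hZo hO, ← hZodef, ← hAodef]
  have hBo' : ∑' m, fB (2 * m + 1) = Ao := by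
    rw [tsum_congr hBodd, ← hAodef]
  have E1 : (1 / c) * Z + Zo = Z := by
    rw [← hZe', hZodef, hZdef]
    exact tsum_even_add_odd hZe hZo
  have E2 : (1 / c) * A + (Zo - Ao) = A := by
    rw [← hAe', ← hAo', hAdef]
    exact tsum_even_add_odd hAe hAo
  have E3 : (1 / c) * (Z - B) + Ao = B := by
    rw [← hBe', ← hBo', hBdef]
    exact tsum_even_add_odd hBe hBo
  -- identify the sums in the goal
  have hfB0 : fB 0 = 0 := by
    show (tm (0 - 1) : ℂ) / ((0:ℕ):ℂ) ^ s = 0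
    rw [hcast0, div_zero]
  have hfZ0 : fZ 0 = 0 := by
    show 1 / ((0:ℕ):ℂ) ^ s = 0
    rw [hcast0, div_zero]
  have hfA0 : fA 0 = 0 := by
    show (tm 0 : ℂ) / ((0:ℕ):ℂ) ^ s = 0
    rw [hcast0, div_zero]
  have hcastn : ∀ n : ℕ, ((n : ℂ) + 1) = ((n + 1 : ℕ) : ℂ) := by
    intro n; push_cast; ring
  have hLHS : ∑' n : ℕ, ((tm n : ℂ) - (k : ℂ)) / ((n : ℂ) + 1) ^ s = B - (k : ℂ) * Z := by
    have step : ∀ n : ℕ, ((tm n : ℂ) - (k : ℂ)) / ((n : ℂ) + 1) ^ s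
        = fB (n + 1) - (k : ℂ) * fZ (n + 1) := by
      intro n
      rw [hcastn n]
      show _ = (tm (n + 1 - 1) : ℂ) / ((n+1:ℕ):ℂ) ^ s - (k:ℂ) * (1 / ((n+1:ℕ):ℂ) ^ s)
      rw [show n + 1 - 1 = n by omega]
      rw [sub_div]
      ring
    rw [tsum_congr step]
    have hB1 : Summable fun n => fB (n + 1) := (summable_nat_add_iff 1).mpr hB
    have hZ1 : Summable fun n => fZ (n + 1) := (summable_nat_add_iff 1).mpr hZ
    rw [Summable.tsum_sub hB1 (hZ1.mul_left _), tsum_mul_left]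
    have e1 : ∑' n, fB (n + 1) = B := by
      rw [hBdef, Summable.tsum_eq_zero_add hB, hfB0, zero_add]
    have e2 : ∑' n, fZ (n + 1) = Z := by
      rw [hZdef, Summable.tsum_eq_zero_add hZ, hfZ0, zero_add]
    rw [e1, e2]
  have hRHS : ∑' n : ℕ, ((tm (n + 1) : ℂ) + (l : ℂ)) / ((n : ℂ) + 1) ^ s = A + (l : ℂ) * Z := by
    have step : ∀ n : ℕ, ((tm (n + 1) : ℂ) + (l : ℂ)) / ((n : ℂ) + 1) ^ s
        = fA (n + 1) + (l : ℂ) * fZ (n + 1) := by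
      intro n
      rw [hcastn n]
      show _ = (tm (n + 1) : ℂ) / ((n+1:ℕ):ℂ) ^ s + (l:ℂ) * (1 / ((n+1:ℕ):ℂ) ^ s)
      rw [add_div]
      ring
    rw [tsum_congr step]
    have hA1 : Summable fun n => fA (n + 1) := (summable_nat_add_iff 1).mpr hA
    have hZ1 : Summable fun n => fZ (n + 1) := (summable_nat_add_iff 1).mpr hZ
    rw [Summable.tsum_add hA1 (hZ1.mul_left _), tsum_mul_left]
    have e1 : ∑' n, fA (n + 1) = A := by
      rw [hAdef, Summable.tsum_eq_zero_add hA, hfA0, zero_add]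
    have e2 : ∑' n, fZ (n + 1) = Z := by
      rw [hZdef, Summable.tsum_eq_zero_add hZ, hfZ0, zero_add]
    rw [e1, e2]
  rw [hLHS, hRHS]
  have hc' : c * (1 / c) = 1 := by field_simp
  have key : (1 + c) * B = c * Z + (1 - c) * A := by
    linear_combination c * E1 - c * E2 - c * E3 - (B - A) * hc'
  rw [div_mul_eq_mul_div, eq_div_iff hc1]
  linear_combination key + Z * hl
end
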